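/- arXiv:1603.00590 — 8 statements merged into one kernel-verified Lean document; each statement's English description precedes it below -/
import Mathlib

section
/- For every unit vector u ∈ ℝⁿ, the function f(t) = j_G(0, t·u) (defined for 0 ≤ t < d_G(0), where t·u ∈ G) has derivative 1/d_G(0) at t = 0 from the right; that is, f has derivative 1/d_G(0) at 0 within the set [0,∞). -/
/-! With `m t = min (d_G 0) (d_G (t • u))`, continuous with `m 0 = d_G 0 > 0`, and `|t • u| = t`
for `t ≥ 0`, the function is `log (1 + t / m t)` on `[0, ∞)`. The difference quotient of
`t / m t` at `0` is `(m t)⁻¹`, so it has derivative `(m 0)⁻¹` by continuity alone, and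
`log (1 + ·)` has derivative `1` at `0`. -/

open Metric

theorem hasDerivWithinAt_sub_smul_of_continuousWithinAt {𝕜 F : Type*} [NontriviallyNormedField 𝕜]
    [NormedAddCommGroup F] [NormedSpace 𝕜 F] {h : 𝕜 → F} {s : Set 𝕜} {a : 𝕜}
    (hh : ContinuousWithinAt h s a) :
    HasDerivWithinAt (fun t => (t - a) • h t) (h a) s a := by
  rw [hasDerivWithinAt_iff_tendsto_slope]
  refine (hh.mono Set.sdiff_subset).tendsto.congr' ?_
  filter_upwards [self_mem_nhdsWithin] with t ht
  have hta : t - a ≠ 0 := sub_ne_zero.2 ht.2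
  simp [slope_def_module, smul_smul, inv_mul_cancel₀ hta]

theorem hasDerivWithinAt_log_one_add_div {m : ℝ → ℝ} {s : Set ℝ}
    (hm : ContinuousWithinAt m s 0) (hm0 : m 0 ≠ 0) :
    HasDerivWithinAt (fun t => Real.log (1 + t / m t)) (1 / m 0) s 0 := by
  have hdiv : HasDerivWithinAt (fun t => t / m t) (m 0)⁻¹ s 0 := by
    simpa [div_eq_mul_inv] using
      hasDerivWithinAt_sub_smul_of_continuousWithinAt (hm.inv₀ hm0)
  have hlog : HasDerivAt (fun x : ℝ => Real.log (1 + x)) 1 (0 / m 0) := by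
    simpa using ((hasDerivAt_id (0 : ℝ)).const_add 1).log (by norm_num)
  simpa [one_div, Function.comp_def] using hlog.comp_hasDerivWithinAt 0 hdiv

theorem distance_ratio_deriv_at_zero_general (n : ℕ)
    (G : Set (EuclideanSpace ℝ (Fin n)))
    (hGopen : IsOpen G) (hGne : G ≠ Set.univ)
    (h0 : (0 : EuclideanSpace ℝ (Fin n)) ∈ G)
    (u : EuclideanSpace ℝ (Fin n)) (hu : ‖u‖ = 1) :
    HasDerivWithinAt
      (fun t : ℝ =>
        Real.log (1 + dist 0 (t • u) /
          min (Metric.infDist 0 Gᶜ) (Metric.infDist (t • u) Gᶜ)))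
      (1 / Metric.infDist 0 Gᶜ) (Set.Ici 0) 0 := by
  set m : ℝ → ℝ := fun t => min (infDist 0 Gᶜ) (infDist (t • u) Gᶜ)
  have hd0 : 0 < infDist (0 : EuclideanSpace ℝ (Fin n)) Gᶜ :=
    (hGopen.isClosed_compl.notMem_iff_infDist_pos (Set.nonempty_compl.2 hGne)).1
      (Set.notMem_compl_iff.2 h0)
  have hm0 : m 0 = infDist 0 Gᶜ := by simp [m]
  have hm : Continuous m := by fun_prop
  have hdist : ∀ t ∈ Set.Ici (0 : ℝ), dist 0 (t • u) = t := fun t ht => by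
    rw [dist_zero_left, norm_smul, hu, mul_one, Real.norm_of_nonneg ht]
  have key := hasDerivWithinAt_log_one_add_div (s := Set.Ici 0) hm.continuousWithinAt
    (hm0 ▸ hd0.ne')
  rw [hm0] at key
  exact key.congr (fun t ht => by rw [hdist t ht]) (by rw [hdist 0 Set.self_mem_Ici])

/-- Let `G ⊊ ℝⁿ` be a domain with `0 ∈ G`. For every unit vector `u`,
the function `f t = j_G(0, t • u) = log (1 + dist 0 (t • u) / min (d_G 0) (d_G (t • u)))`
has right derivative `1 / d_G 0` at `t = 0`, i.e. derivative within `[0, ∞)`. -/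
theorem distance_ratio_deriv_at_zero (n : ℕ) (hn : 0 < n)
    (G : Set (EuclideanSpace ℝ (Fin n)))
    (hGopen : IsOpen G) (hGconn : IsConnected G) (hGne : G ≠ Set.univ)
    (h0 : (0 : EuclideanSpace ℝ (Fin n)) ∈ G)
    (u : EuclideanSpace ℝ (Fin n)) (hu : ‖u‖ = 1) :
    HasDerivWithinAt
      (fun t : ℝ =>
        Real.log (1 + dist 0 (t • u) /
          min (Metric.infDist 0 Gᶜ) (Metric.infDist (t • u) Gᶜ)))
      (1 / Metric.infDist 0 Gᶜ) (Set.Ici 0) 0 :=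
  distance_ratio_deriv_at_zero_general n G hGopen hGne h0 u hu
end

section
/- For every y ∈ G and every continuously differentiable curve γ : [0,1] → ℝⁿ whose image is contained in G, with γ(0) = 0 and γ(1) = y, the quasihyperbolic length of γ satisfies ∫₀¹ ‖γ′(s)‖ / d_G(γ(s)) ds ≥ log(1 + |y| / d_G(0)). Consequently the quasihyperbolic distance satisfies k_G(0,y) ≥ log(1 + |y| / d_G(0)). -/
/-!
Along a curve starting at `0`, the distance to the boundary grows at most as fast as the arc
length `L`, so `d_G(γ s) ≤ d_G(0) + L(s)`. Hence the quasihyperbolic length dominates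
`∫ L' / (d_G(0) + L) = log (1 + L(1) / d_G(0))`, and `L(1) ≥ |y|`. The bound on `k_G(0, y)`
follows because `G`, being open and connected, contains a `C¹` curve from `0` to `y`, so the
infimum is taken over a nonempty set.
-/

open Metric Set
open scoped ContDiff

variable {E : Type*} [NormedAddCommGroup E] [NormedSpace ℝ E] [CompleteSpace E]

section ArcLength

variable {γ : ℝ → E} {a b : ℝ}

theorem norm_sub_le_integral_norm_deriv (hγ : ContDiff ℝ 1 γ) (hab : a ≤ b) :
    ‖γ b - γ a‖ ≤ ∫ t in a..b, ‖deriv γ t‖ := by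
  have hftc : ∫ t in a..b, deriv γ t = γ b - γ a :=
    intervalIntegral.integral_deriv_eq_sub
      (fun t _ => (hγ.differentiable one_ne_zero).differentiableAt)
      ((hγ.continuous_deriv le_rfl).intervalIntegrable a b)
  rw [← hftc]
  exact intervalIntegral.norm_integral_le_integral_norm hab

theorem infDist_le_infDist_add_integral_norm_deriv (F : Set E) (hγ : ContDiff ℝ 1 γ)
    (hab : a ≤ b) : infDist (γ b) F ≤ infDist (γ a) F + ∫ t in a..b, ‖deriv γ t‖ :=
  calc infDist (γ b) F ≤ infDist (γ a) F + dist (γ b) (γ a) := infDist_le_infDist_add_dist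
    _ ≤ infDist (γ a) F + ∫ t in a..b, ‖deriv γ t‖ := by
      rw [dist_eq_norm]
      gcongr
      exact norm_sub_le_integral_norm_deriv hγ hab

theorem log_one_add_div_infDist_le_integral (F : Set E) (hγ : ContDiff ℝ 1 γ) (hab : a ≤ b)
    (hpos : ∀ s ∈ Icc a b, 0 < infDist (γ s) F) :
    Real.log (1 + ‖γ b - γ a‖ / infDist (γ a) F) ≤
      ∫ s in a..b, ‖deriv γ s‖ / infDist (γ s) F := by
  set d := infDist (γ a) F
  have hd : 0 < d := hpos a ⟨le_rfl, hab⟩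
  have hg : Continuous fun s => ‖deriv γ s‖ := (hγ.continuous_deriv le_rfl).norm
  set L : ℝ → ℝ := fun s => ∫ t in a..s, ‖deriv γ t‖
  have hL : ∀ s, HasDerivAt L ‖deriv γ s‖ s := fun s =>
    (hg.integral_hasStrictDerivAt a s).hasDerivAt
  have hLc : Continuous L := continuous_iff_continuousAt.2 fun s => (hL s).continuousAt
  have hdL : ∀ s ∈ uIcc a b, 0 < d + L s := fun s hs =>
    add_pos_of_pos_of_nonneg hd <| intervalIntegral.integral_nonneg
      (uIcc_of_le hab ▸ hs).1 fun t _ => norm_nonneg _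
  have hcomp : ∀ s ∈ Icc a b, ‖deriv γ s‖ / (d + L s) ≤ ‖deriv γ s‖ / infDist (γ s) F :=
    fun s hs => by
      gcongr
      · exact hpos s hs
      · exact infDist_le_infDist_add_integral_norm_deriv F hγ hs.1
  have hint : IntervalIntegrable (fun s => ‖deriv γ s‖ / (d + L s)) MeasureTheory.volume a b :=
    (hg.continuousOn.div (continuous_const.add hLc).continuousOn
      fun s hs => (hdL s hs).ne').intervalIntegrable
  have hlog : ∫ s in a..b, ‖deriv γ s‖ / (d + L s) = Real.log (d + L b) - Real.log d := by
    rw [intervalIntegral.integral_eq_sub_of_hasDerivAt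
      (fun s hs => ((hL s).const_add d).log (hdL s hs).ne') hint]
    simp [L]
  calc Real.log (1 + ‖γ b - γ a‖ / d) ≤ Real.log (1 + L b / d) := by
        gcongr
        exact norm_sub_le_integral_norm_deriv hγ hab
    _ = ∫ s in a..b, ‖deriv γ s‖ / (d + L s) := by
        rw [hlog, ← Real.log_div (hdL b right_mem_uIcc).ne' hd.ne', add_div, div_self hd.ne']
    _ ≤ ∫ s in a..b, ‖deriv γ s‖ / infDist (γ s) F := by
        refine intervalIntegral.integral_mono_on hab hint ?_ hcomp
        exact (hg.continuousOn.div ((continuous_infDist_pt F).comp hγ.continuous).continuousOn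
          fun s hs => (hpos s (uIcc_of_le hab ▸ hs)).ne').intervalIntegrable

end ArcLength

/-- Smooth a path in the thickening of its image inside `U`, then correct the endpoints by an
affine term that is small on `[0, 1]`. -/
theorem JoinedIn.exists_contDiff {U : Set E} (hU : IsOpen U) {x y : E} (h : JoinedIn U x y) :
    ∃ γ : ℝ → E, ContDiff ℝ ∞ γ ∧ (∀ s ∈ Icc (0 : ℝ) 1, γ s ∈ U) ∧ γ 0 = x ∧ γ 1 = y := by
  obtain ⟨p, hpU⟩ := h
  obtain ⟨δ, hδ, hthick⟩ :=
    (isCompact_range p.continuous).exists_thickening_subset_open hU (range_subset_iff.2 hpU)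
  obtain ⟨g, hg, hgp⟩ := p.uniformContinuous_extend.exists_contDiff_dist_le (half_pos hδ)
  refine ⟨fun t => g t + (1 - t) • (x - g 0) + t • (y - g 1), by fun_prop, fun t ht => ?_,
    by simp, by simp⟩
  apply hthick
  rw [mem_thickening_iff]
  refine ⟨p.extend t, p.extend_range ▸ mem_range_self t, ?_⟩
  have hx : ‖x - g 0‖ ≤ δ / 2 := by simpa [dist_eq_norm'] using (hgp 0).le
  have hy : ‖y - g 1‖ ≤ δ / 2 := by simpa [dist_eq_norm'] using (hgp 1).le
  calc dist (g t + (1 - t) • (x - g 0) + t • (y - g 1)) (p.extend t)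
      ≤ dist (g t) (p.extend t) + (1 - t) * ‖x - g 0‖ + t * ‖y - g 1‖ := by
        rw [dist_eq_norm, dist_eq_norm, add_sub_right_comm, add_sub_right_comm (g t)]
        refine (norm_add₃_le).trans_eq ?_
        rw [norm_smul, norm_smul, Real.norm_of_nonneg (sub_nonneg.2 ht.2),
          Real.norm_of_nonneg ht.1]
    _ < δ / 2 + (1 - t) * (δ / 2) + t * (δ / 2) :=
        add_lt_add_of_lt_of_le (add_lt_add_of_lt_of_le (hgp t)
          (mul_le_mul_of_nonneg_left hx (sub_nonneg.2 ht.2))) (mul_le_mul_of_nonneg_left hy ht.1)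
    _ = δ := by ring

theorem quasihyperbolic_lower_bound_general (n : ℕ)
    (G : Set (EuclideanSpace ℝ (Fin n)))
    (hGopen : IsOpen G) (hGconn : IsConnected G) (hGne : G ≠ Set.univ)
    (h0 : (0 : EuclideanSpace ℝ (Fin n)) ∈ G)
    (y : EuclideanSpace ℝ (Fin n)) (hy : y ∈ G) :
    (∀ γ : ℝ → EuclideanSpace ℝ (Fin n), ContDiff ℝ 1 γ →
        (∀ s ∈ Set.Icc (0 : ℝ) 1, γ s ∈ G) → γ 0 = 0 → γ 1 = y →
        Real.log (1 + ‖y‖ / Metric.infDist 0 Gᶜ) ≤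
          ∫ s in (0 : ℝ)..1, ‖deriv γ s‖ / Metric.infDist (γ s) Gᶜ) ∧
      Real.log (1 + ‖y‖ / Metric.infDist 0 Gᶜ) ≤
        sInf {L : ℝ | ∃ γ : ℝ → EuclideanSpace ℝ (Fin n), ContDiff ℝ 1 γ ∧
          (∀ s ∈ Set.Icc (0 : ℝ) 1, γ s ∈ G) ∧ γ 0 = 0 ∧ γ 1 = y ∧
          L = ∫ s in (0 : ℝ)..1, ‖deriv γ s‖ / Metric.infDist (γ s) Gᶜ} := by
  have hpos : ∀ z ∈ G, 0 < infDist z Gᶜ := fun z hz =>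
    (hGopen.isClosed_compl.notMem_iff_infDist_pos (nonempty_compl.2 hGne)).1 (not_not_intro hz)
  have hcurve : ∀ γ : ℝ → EuclideanSpace ℝ (Fin n), ContDiff ℝ 1 γ →
      (∀ s ∈ Icc (0 : ℝ) 1, γ s ∈ G) → γ 0 = 0 → γ 1 = y →
      Real.log (1 + ‖y‖ / infDist 0 Gᶜ) ≤ ∫ s in (0 : ℝ)..1, ‖deriv γ s‖ / infDist (γ s) Gᶜ := by
    intro γ hγ hγG hγ0 hγ1
    simpa [hγ0, hγ1] using log_one_add_div_infDist_le_integral Gᶜ hγ zero_le_one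
      fun s hs => hpos _ (hγG s hs)
  refine ⟨hcurve, le_csInf ?_ ?_⟩
  · obtain ⟨γ, hγ, hγG, hγ0, hγ1⟩ :=
      ((hGopen.isConnected_iff_isPathConnected.1 hGconn).joinedIn 0 h0 y hy).exists_contDiff hGopen
    exact ⟨_, γ, hγ.of_le (by simp), hγG, hγ0, hγ1, rfl⟩
  · rintro _ ⟨γ, hγ, hγG, hγ0, hγ1, rfl⟩
    exact hcurve γ hγ hγG hγ0 hγ1

/-- Let `G ⊊ ℝⁿ` be a domain with `0 ∈ G` and `y ∈ G`. Every
continuously differentiable curve `γ : [0,1] → ℝⁿ` with image in `G` joining `0` to `y`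
has quasihyperbolic length `∫₀¹ ‖γ'(s)‖ / d_G (γ s) ds ≥ log (1 + |y| / d_G 0)`;
consequently the quasihyperbolic distance `k_G(0,y)` (the infimum of these lengths)
satisfies the same lower bound. -/
theorem quasihyperbolic_lower_bound (n : ℕ) (hn : 0 < n)
    (G : Set (EuclideanSpace ℝ (Fin n)))
    (hGopen : IsOpen G) (hGconn : IsConnected G) (hGne : G ≠ Set.univ)
    (h0 : (0 : EuclideanSpace ℝ (Fin n)) ∈ G)
    (y : EuclideanSpace ℝ (Fin n)) (hy : y ∈ G) :
    (∀ γ : ℝ → EuclideanSpace ℝ (Fin n), ContDiff ℝ 1 γ →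
        (∀ s ∈ Set.Icc (0 : ℝ) 1, γ s ∈ G) → γ 0 = 0 → γ 1 = y →
        Real.log (1 + ‖y‖ / Metric.infDist 0 Gᶜ) ≤
          ∫ s in (0 : ℝ)..1, ‖deriv γ s‖ / Metric.infDist (γ s) Gᶜ) ∧
      Real.log (1 + ‖y‖ / Metric.infDist 0 Gᶜ) ≤
        sInf {L : ℝ | ∃ γ : ℝ → EuclideanSpace ℝ (Fin n), ContDiff ℝ 1 γ ∧
          (∀ s ∈ Set.Icc (0 : ℝ) 1, γ s ∈ G) ∧ γ 0 = 0 ∧ γ 1 = y ∧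
          L = ∫ s in (0 : ℝ)..1, ‖deriv γ s‖ / Metric.infDist (γ s) Gᶜ} :=
  quasihyperbolic_lower_bound_general n G hGopen hGconn hGne h0 y hy
end

section
/- For every unit vector u ∈ ℝⁿ, the function f(t) = σ_G(0, t·u) = tan(π·s_G(0,t·u)/2) (defined for 0 ≤ t < d_G(0)) has derivative π/(4·d_G(0)) at t = 0 from the right; that is, f has derivative π/(4·d_G(0)) at 0 within the set [0,∞). -/
/-!
The nearest boundary point `q₀` of `G` to `0` (at distance `d = d_G(0)`) and the triangle
inequality squeeze the triangular ratio along the ray: for `0 < t < d`,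
`t / (2d + t) ≤ s_G(0, t • u) ≤ t / (2d - t)`, since every boundary point `q` has
`|q| + |q - t • u| ≥ 2d - t`, while `q₀` gives `|q₀| + |q₀ - t • u| ≤ 2d + t`. Both bounds have
derivative `1 / (2d)` at `0`, hence so does `s_G(0, t • u)` from the right, and the chain rule
with `x ↦ tan (π x / 2)`, of derivative `π / 2` at `0`, gives `π / (4d)`.
-/

open Real Set Metric Filter Topology

section TriangularRatio

variable {X : Type*} [PseudoMetricSpace X]

/-- The paper's `s_G(x, y)` is `triangularRatio (frontier G) x y`. -/
noncomputable def triangularRatio (S : Set X) (x y : X) : ℝ :=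
  sSup ((fun q => dist x y / (dist x q + dist q y)) '' S)

theorem triangularRatio_self (S : Set X) (x : X) : triangularRatio S x x = 0 := by
  have hzero : ∀ r ∈ (fun q => dist x x / (dist x q + dist q x)) '' S, r = 0 := by
    rintro r ⟨q, -, rfl⟩
    simp
  exact le_antisymm (Real.sSup_nonpos fun r hr => (hzero r hr).le)
    (Real.sSup_nonneg fun r hr => (hzero r hr).ge)

theorem div_dist_add_dist_le {x y q : X} {d : ℝ} (hq : d ≤ dist x q) (hy : dist x y < d) :
    dist x y / (dist x q + dist q y) ≤ dist x y / (2 * d - dist x y) := by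
  have hden : 2 * d - dist x y ≤ dist x q + dist q y := by
    linarith [dist_triangle x y q, dist_comm q y]
  exact div_le_div_of_nonneg_left dist_nonneg (by linarith [dist_nonneg (x := x) (y := y)]) hden

theorem triangularRatio_le {S : Set X} {x y : X} {d t : ℝ} (hS : ∀ q ∈ S, d ≤ dist x q)
    (hy : dist x y = t) (htd : t < d) : triangularRatio S x y ≤ t / (2 * d - t) := by
  subst hy
  refine Real.sSup_le ?_ (div_nonneg dist_nonneg (by linarith [dist_nonneg (x := x) (y := y)]))
  rintro r ⟨q, hq, rfl⟩
  exact div_dist_add_dist_le (hS q hq) htd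

theorem le_triangularRatio {S : Set X} {x y q₀ : X} {d t : ℝ} (hS : ∀ q ∈ S, d ≤ dist x q)
    (hq₀ : q₀ ∈ S) (hq₀d : dist x q₀ = d) (hy : dist x y = t) (htd : t < d) :
    t / (2 * d + t) ≤ triangularRatio S x y := by
  subst hy
  have hbdd : BddAbove ((fun q => dist x y / (dist x q + dist q y)) '' S) :=
    ⟨_, by rintro r ⟨q, hq, rfl⟩; exact div_dist_add_dist_le (hS q hq) htd⟩
  refine le_trans ?_ (le_csSup hbdd ⟨q₀, hq₀, rfl⟩)
  have hden : dist x q₀ + dist q₀ y ≤ 2 * d + dist x y := by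
    linarith [dist_triangle q₀ x y, dist_comm q₀ x]
  exact div_le_div_of_nonneg_left dist_nonneg
    (by linarith [dist_nonneg (x := q₀) (y := y), dist_nonneg (x := x) (y := y)]) hden

end TriangularRatio

theorem infDist_compl_le_dist_of_mem_frontier {X : Type*} [PseudoMetricSpace X] {s : Set X}
    (x : X) {q : X} (hq : q ∈ frontier s) : infDist x sᶜ ≤ dist x q := by
  rw [← infDist_closure]
  exact infDist_le_dist_of_mem (frontier_subset_closure (by rwa [frontier_compl]))

theorem hasDerivWithinAt_Ici_of_squeeze {f g h : ℝ → ℝ} {a L : ℝ}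
    (hg : HasDerivWithinAt g L (Ioi a) a) (hh : HasDerivWithinAt h L (Ioi a) a)
    (hga : g a = f a) (hha : h a = f a)
    (hgf : ∀ᶠ t in 𝓝[>] a, g t ≤ f t) (hfh : ∀ᶠ t in 𝓝[>] a, f t ≤ h t) :
    HasDerivWithinAt f L (Ici a) a := by
  rw [hasDerivWithinAt_iff_tendsto_slope, sdiff_singleton_eq_self self_notMem_Ioi] at hg hh
  rw [← hasDerivWithinAt_Ioi_iff_Ici, hasDerivWithinAt_iff_tendsto_slope,
    sdiff_singleton_eq_self self_notMem_Ioi]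
  refine tendsto_of_tendsto_of_tendsto_of_le_of_le' hg hh ?_ ?_
  · filter_upwards [hgf, self_mem_nhdsWithin] with t ht hta
    simp only [slope_def_field, hga]
    exact div_le_div_of_nonneg_right (by linarith) (sub_pos.2 hta).le
  · filter_upwards [hfh, self_mem_nhdsWithin] with t ht hta
    simp only [slope_def_field, hha]
    exact div_le_div_of_nonneg_right (by linarith) (sub_pos.2 hta).le

theorem hasDerivAt_div_const_add_mul {c : ℝ} (hc : c ≠ 0) (ε : ℝ) :
    HasDerivAt (fun t => t / (c + ε * t)) c⁻¹ 0 := by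
  have hden : HasDerivAt (fun t => c + ε * t) ε 0 := by
    simpa using ((hasDerivAt_id (0 : ℝ)).const_mul ε).const_add c
  refine ((hasDerivAt_id (0 : ℝ)).div hden (by simpa using hc)).congr_deriv ?_
  simp only [mul_zero, add_zero, one_mul, id_eq, zero_mul, sub_zero]
  field_simp

theorem hasDerivAt_tan_pi_mul_div_two : HasDerivAt (fun x => tan (π * x / 2)) (π / 2) 0 := by
  have hlin : HasDerivAt (fun x : ℝ => π * x / 2) (π / 2) 0 := by
    simpa using ((hasDerivAt_id (0 : ℝ)).const_mul π).div_const 2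
  have htan : HasDerivAt tan 1 (π * 0 / 2) := by
    simpa using Real.hasDerivAt_tan (x := π * 0 / 2) (by simp)
  exact (htan.comp 0 hlin).congr_deriv (one_mul _)

theorem sigma_deriv_at_zero_general (n : ℕ)
    (G : Set (EuclideanSpace ℝ (Fin n)))
    (hGopen : IsOpen G) (hGne : G ≠ Set.univ)
    (h0 : (0 : EuclideanSpace ℝ (Fin n)) ∈ G)
    (u : EuclideanSpace ℝ (Fin n)) (hu : ‖u‖ = 1) :
    HasDerivWithinAt
      (fun t : ℝ =>
        Real.tan (Real.pi *
          sSup ((fun q => dist 0 (t • u) / (dist 0 q + dist q (t • u))) '' frontier G)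
          / 2))
      (Real.pi / (4 * Metric.infDist 0 Gᶜ)) (Set.Ici 0) 0 := by
  set d := infDist (0 : EuclideanSpace ℝ (Fin n)) Gᶜ
  have hd : 0 < d :=
    (hGopen.isClosed_compl.notMem_iff_infDist_pos (nonempty_compl.2 hGne)).1 (not_not.2 h0)
  obtain ⟨q₀, hq₀, hq₀d⟩ := exists_mem_frontier_infDist_compl_eq_dist h0 hGne
  have hS : ∀ q ∈ frontier G, d ≤ dist 0 q := fun q => infDist_compl_le_dist_of_mem_frontier 0
  have hray : ∀ t ∈ Ioo 0 d, dist 0 (t • u) = t := fun t ht => by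
    rw [dist_comm, dist_zero_right, norm_smul, hu, mul_one, norm_of_nonneg ht.1.le]
  have hnear : Ioo 0 d ∈ 𝓝[>] (0 : ℝ) := Ioo_mem_nhdsGT hd
  have hs : HasDerivWithinAt (fun t : ℝ => triangularRatio (frontier G) 0 (t • u))
      (2 * d)⁻¹ (Ici 0) 0 := by
    have hc : 2 * d ≠ 0 := by positivity
    refine hasDerivWithinAt_Ici_of_squeeze
      (by simpa using (hasDerivAt_div_const_add_mul hc 1).hasDerivWithinAt)
      (by simpa [← sub_eq_add_neg] using (hasDerivAt_div_const_add_mul hc (-1)).hasDerivWithinAt)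
      (by simp [triangularRatio_self]) (by simp [triangularRatio_self]) ?_ ?_
    · filter_upwards [hnear] with t ht
      exact le_triangularRatio hS hq₀ hq₀d.symm (hray t ht) ht.2
    · filter_upwards [hnear] with t ht
      exact triangularRatio_le hS (hray t ht) ht.2
  have hs0 : triangularRatio (frontier G) 0 ((0 : ℝ) • u) = 0 := by
    simp [triangularRatio_self]
  refine (hasDerivAt_tan_pi_mul_div_two.comp_hasDerivWithinAt_of_eq 0 hs hs0.symm).congr_deriv ?_
  field_simp
  ring

/-- Let `G ⊊ ℝⁿ` be a domain with `0 ∈ G`. For every unit vector `u`,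
the function `f t = σ_G(0, t • u) = tan (π s_G(0, t • u) / 2)`, where
`s_G(0,w) = sup_{q ∈ ∂G} |0-w| / (|0-q| + |q-w|)`, has right derivative
`π / (4 d_G 0)` at `t = 0`, i.e. derivative within `[0, ∞)`. -/
theorem sigma_deriv_at_zero (n : ℕ) (hn : 0 < n)
    (G : Set (EuclideanSpace ℝ (Fin n)))
    (hGopen : IsOpen G) (hGconn : IsConnected G) (hGne : G ≠ Set.univ)
    (h0 : (0 : EuclideanSpace ℝ (Fin n)) ∈ G)
    (u : EuclideanSpace ℝ (Fin n)) (hu : ‖u‖ = 1) :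
    HasDerivWithinAt
      (fun t : ℝ =>
        Real.tan (Real.pi *
          sSup ((fun q => dist 0 (t • u) / (dist 0 q + dist q (t • u))) '' frontier G)
          / 2))
      (Real.pi / (4 * Metric.infDist 0 Gᶜ)) (Set.Ici 0) 0 :=
  sigma_deriv_at_zero_general n G hGopen hGne h0 u hu
end

section
/- For every y ∈ G one has c_G(0,y) ≥ |y| / ( d_G(0)·(d_G(0) + |y|) ); moreover, if |y| < d_G(0), then c_G(0,y) ≤ |y| / ( d_G(0)·(d_G(0) − |y|) ). -/
/-!
The nearest point `q₀` of `Gᶜ` to `0` lies on `∂G` at distance `d_G(0)`, and `|q₀ - y| ≤ d_G(0) + |y|`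
gives the lower bound. Every `q ∈ ∂G` lies outside `G`, so `|q| ≥ d_G(0)` and
`|q - y| ≥ |q| - |y| ≥ d_G(0) - |y|`, which gives the upper bound.
-/

open Metric Set

/-- Its supremum over `q ∈ ∂G` is the Cassinian distance `c_G(x, y)`. -/
noncomputable def cassinianRatio {X : Type*} [PseudoMetricSpace X] (x y q : X) : ℝ :=
  dist x y / (dist x q * dist q y)

section CassinianRatio

variable {X : Type*} [PseudoMetricSpace X] {s : Set X} {x y q : X}

theorem IsOpen.infDist_compl_pos {G : Set X} (hG : IsOpen G) (hne : G ≠ univ) (hx : x ∈ G) :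
    0 < infDist x Gᶜ :=
  (hG.isClosed_compl.notMem_iff_infDist_pos (nonempty_compl.2 hne)).1 (not_not.2 hx)

theorem cassinianRatio_le_of_mem (hq : q ∈ s) (hx : 0 < infDist x s) (hy : 0 < infDist y s) :
    cassinianRatio x y q ≤ dist x y / (infDist x s * infDist y s) := by
  have hxq : infDist x s ≤ dist x q := infDist_le_dist_of_mem hq
  have hqy : infDist y s ≤ dist q y := dist_comm y q ▸ infDist_le_dist_of_mem hq
  unfold cassinianRatio
  gcongr

theorem cassinianRatio_le_of_dist_lt_infDist (hq : q ∈ s) (h : dist x y < infDist x s) :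
    cassinianRatio x y q ≤ dist x y / (infDist x s * (infDist x s - dist x y)) := by
  have hxq : infDist x s ≤ dist x q := infDist_le_dist_of_mem hq
  have hqy : infDist x s - dist x y ≤ dist q y := by
    linarith [dist_triangle x y q, dist_comm y q]
  have hpos : 0 < infDist x s - dist x y := sub_pos.2 h
  have hx : 0 < infDist x s := dist_nonneg.trans_lt h
  unfold cassinianRatio
  gcongr

theorem div_mul_add_le_cassinianRatio (hxq : 0 < dist x q) (hqy : 0 < dist q y) :
    dist x y / (dist x q * (dist x q + dist x y)) ≤ cassinianRatio x y q := by
  have htri : dist q y ≤ dist x q + dist x y := by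
    linarith [dist_triangle q x y, dist_comm q x]
  unfold cassinianRatio
  gcongr

end CassinianRatio

theorem cassinian_bounds_general (n : ℕ)
    (G : Set (EuclideanSpace ℝ (Fin n)))
    (hGopen : IsOpen G) (hGne : G ≠ Set.univ)
    (h0 : (0 : EuclideanSpace ℝ (Fin n)) ∈ G)
    (y : EuclideanSpace ℝ (Fin n)) (hy : y ∈ G)
    (c : ℝ)
    (hc : c = sSup ((fun q => dist 0 y / (dist 0 q * dist q y)) '' frontier G)) :
    ‖y‖ / (Metric.infDist 0 Gᶜ * (Metric.infDist 0 Gᶜ + ‖y‖)) ≤ c ∧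
      (‖y‖ < Metric.infDist 0 Gᶜ →
        c ≤ ‖y‖ / (Metric.infDist 0 Gᶜ * (Metric.infDist 0 Gᶜ - ‖y‖))) := by
  change c = sSup (cassinianRatio 0 y '' frontier G) at hc
  have hfrontier : frontier G ⊆ Gᶜ := fun q hq => (hGopen.frontier_eq ▸ hq).2
  obtain ⟨q₀, hq₀, hq₀dist⟩ := exists_mem_frontier_infDist_compl_eq_dist h0 hGne
  have hD : 0 < infDist 0 Gᶜ := hGopen.infDist_compl_pos hGne h0
  have hbdd : BddAbove (cassinianRatio 0 y '' frontier G) :=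
    ⟨_, forall_mem_image.2 fun q hq =>
      cassinianRatio_le_of_mem (hfrontier hq) hD (hGopen.infDist_compl_pos hGne hy)⟩
  have hq₀y : 0 < dist q₀ y := dist_pos.2 fun h => hfrontier hq₀ (h ▸ hy)
  rw [hc, ← dist_zero_left y]
  refine ⟨?_, fun h => ?_⟩
  · calc _ ≤ cassinianRatio 0 y q₀ := by
          rw [hq₀dist]; exact div_mul_add_le_cassinianRatio (hq₀dist ▸ hD) hq₀y
      _ ≤ _ := le_csSup hbdd (mem_image_of_mem _ hq₀)
  · exact csSup_le ((nonempty_of_mem hq₀).image _) <| forall_mem_image.2 fun q hq =>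
      cassinianRatio_le_of_dist_lt_infDist (hfrontier hq) h

/-- Let `G ⊊ ℝⁿ` be a domain with `0 ∈ G`. For `y ∈ G`, with Cassinian
distance `c_G(0,y) = sup_{q ∈ ∂G} |0-y| / (|0-q| ⬝ |q-y|)`, one has
`c_G(0,y) ≥ |y| / (d_G 0 (d_G 0 + |y|))`; moreover, if `|y| < d_G 0` then
`c_G(0,y) ≤ |y| / (d_G 0 (d_G 0 - |y|))`. -/
theorem cassinian_bounds (n : ℕ) (hn : 0 < n)
    (G : Set (EuclideanSpace ℝ (Fin n)))
    (hGopen : IsOpen G) (hGconn : IsConnected G) (hGne : G ≠ Set.univ)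
    (h0 : (0 : EuclideanSpace ℝ (Fin n)) ∈ G)
    (y : EuclideanSpace ℝ (Fin n)) (hy : y ∈ G)
    (c : ℝ)
    (hc : c = sSup ((fun q => dist 0 y / (dist 0 q * dist q y)) '' frontier G)) :
    ‖y‖ / (Metric.infDist 0 Gᶜ * (Metric.infDist 0 Gᶜ + ‖y‖)) ≤ c ∧
      (‖y‖ < Metric.infDist 0 Gᶜ →
        c ≤ ‖y‖ / (Metric.infDist 0 Gᶜ * (Metric.infDist 0 Gᶜ - ‖y‖))) :=
  cassinian_bounds_general n G hGopen hGne h0 y hy c hc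
end

section
/- Let n ≥ 2, let x ∈ ℝⁿ with x ≠ 0, and let G₂ = ℝⁿ \ S_{π/4,x,2x}. Then G₂ is a domain with 0 ∈ G₂, d_{G₂}(0) = |x|, and for every y = c·x with c ∈ [0,1) the Apollonian distance satisfies α_{G₂}(0,y) = log( |x| / (|x| − |y|) ) (the supremum over boundary pairs being approached but not attained, via boundary points tending to infinity). -/
/-!
Write `S = x + C` for the closed angular domain, where
`C = {w | cos (π/4) ‖x‖ ‖w‖ ≤ ⟪x, w⟫}` is, by the triangle inequality, a convex cone
containing `x`, so that `S` lies in the half-space `‖x‖² ≤ ⟪x, z⟫`.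

* `G₂ = Sᶜ` is star-shaped about `0`: if `t z ∈ S` with `0 < t ≤ 1`, then
  `z - x = t⁻¹ ((t z - x) + (1 - t) x) ∈ C`.
* Every point of `S` has norm at least `‖x‖`, and `x ∈ S`, so `d_{G₂}(0) = ‖x‖`.
* For `y = c x` and `a, b` in the half-space, `‖a - y‖ ≤ ‖a‖` and `(1 - c) ‖b‖ ≤ ‖b - y‖`,
  so the Apollonian ratio is at most `1 / (1 - c) = ‖x‖ / (‖x‖ - ‖y‖)`.
* The bound is approached by `b = x` and boundary points `a` with `‖a‖ → ∞`: every sphere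
  `‖a‖ = R ≥ ‖x‖` meets `∂G₂`, being connected (`n ≥ 2`) and meeting both `G₂` and `S`.
-/

open Real InnerProductGeometry RealInnerProductSpace Filter Topology Set Metric

theorem IsPreconnected.inter_frontier_nonempty {X : Type*} [TopologicalSpace X] {s t : Set X}
    (hs : IsPreconnected s) (hst : (s ∩ t).Nonempty) (hs_t : (s \ t).Nonempty) :
    (s ∩ frontier t).Nonempty := by
  by_contra h
  have hcover : s ⊆ interior t ∪ (closure t)ᶜ := by
    intro z hz
    by_cases hzt : z ∈ closure t
    · exact Or.inl (by_contra fun hzi => h ⟨z, hz, hzt, hzi⟩)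
    · exact Or.inr hzt
  rcases hs.subset_or_subset isOpen_interior isClosed_closure.isOpen_compl
      (disjoint_compl_right.mono_left (interior_subset.trans subset_closure)) hcover
    with hsub | hsub
  · obtain ⟨z, hzs, hzt⟩ := hs_t
    exact hzt (interior_subset (hsub hzs))
  · obtain ⟨z, hzs, hzt⟩ := hst
    exact hsub hzs (subset_closure hzt)

noncomputable def apollonianRatio {X : Type*} [Dist X] (u w a b : X) : ℝ :=
  dist a w * dist b u / (dist a u * dist b w)

theorem apollonianRatio_pos {X : Type*} [MetricSpace X] {u w a b : X} (hau : a ≠ u)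
    (haw : a ≠ w) (hbu : b ≠ u) (hbw : b ≠ w) : 0 < apollonianRatio u w a b := by
  have := dist_pos.2 hau
  have := dist_pos.2 haw
  have := dist_pos.2 hbu
  have := dist_pos.2 hbw
  unfold apollonianRatio
  positivity

section SeminormedAddCommGroup

variable {E : Type*} [SeminormedAddCommGroup E]

theorem mul_norm_le_norm_sub_smul [NormedSpace ℝ E] {x b : E} {c : ℝ} (hc₀ : 0 ≤ c)
    (hb : ‖x‖ ≤ ‖b‖) : (1 - c) * ‖b‖ ≤ ‖b - c • x‖ := by
  have := norm_sub_norm_le b (c • x)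
  rw [norm_smul, Real.norm_of_nonneg hc₀] at this
  nlinarith [mul_le_mul_of_nonneg_left hb hc₀]

theorem tendsto_norm_sub_div_norm {α : Type*} {l : Filter α} {a : α → E} (w : E)
    (ha : Tendsto (fun i => ‖a i‖) l atTop) :
    Tendsto (fun i => ‖a i - w‖ / ‖a i‖) l (𝓝 1) := by
  have hsmall : Tendsto (fun i => ‖w‖ / ‖a i‖) l (𝓝 0) := tendsto_const_nhds.div_atTop ha
  refine tendsto_of_tendsto_of_tendsto_of_le_of_le' (by simpa using hsmall.const_sub 1)
    (by simpa using hsmall.const_add 1) ?_ ?_ <;>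
    filter_upwards [ha.eventually_gt_atTop 0] with i hi
  · rw [one_sub_div hi.ne']
    exact div_le_div_of_nonneg_right (norm_sub_norm_le _ _) hi.le
  · rw [one_add_div hi.ne']
    exact div_le_div_of_nonneg_right (norm_sub_le _ _) hi.le

theorem tendsto_apollonianRatio_zero {α : Type*} {l : Filter α} {a : α → E} (w b : E)
    (ha : Tendsto (fun i => ‖a i‖) l atTop) :
    Tendsto (fun i => apollonianRatio 0 w (a i) b) l (𝓝 (‖b‖ / ‖b - w‖)) := by
  simp only [apollonianRatio, dist_eq_norm, sub_zero, mul_div_mul_comm]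
  simpa using (tendsto_norm_sub_div_norm w ha).mul_const (‖b‖ / ‖b - w‖)

end SeminormedAddCommGroup

section InnerProductSpace

variable {E : Type*} [NormedAddCommGroup E] [InnerProductSpace ℝ E]

theorem InnerProductGeometry.angle_le_iff_cos_mul_le_inner {x w : E} {θ : ℝ} (hx : x ≠ 0)
    (hw : w ≠ 0) (hθ₀ : 0 ≤ θ) (hθπ : θ ≤ π) :
    angle x w ≤ θ ↔ cos θ * (‖x‖ * ‖w‖) ≤ ⟪x, w⟫ := by
  rw [← cos_angle_mul_norm_mul_norm,
    mul_le_mul_iff_left₀ (mul_pos (norm_pos_iff.2 hx) (norm_pos_iff.2 hw)),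
    strictAntiOn_cos.le_iff_ge ⟨hθ₀, hθπ⟩ ⟨angle_nonneg x w, angle_le_pi x w⟩]

theorem norm_le_of_sq_norm_le_inner {x z : E} (h : ‖x‖ ^ 2 ≤ ⟪x, z⟫) : ‖x‖ ≤ ‖z‖ := by
  nlinarith [real_inner_le_norm x z, norm_nonneg x, norm_nonneg z]

theorem norm_sub_smul_le_of_sq_norm_le_inner {x a : E} {c : ℝ} (hc₀ : 0 ≤ c) (hc₂ : c ≤ 2)
    (ha : ‖x‖ ^ 2 ≤ ⟪x, a⟫) : ‖a - c • x‖ ≤ ‖a‖ := by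
  rw [← sq_le_sq₀ (norm_nonneg _) (norm_nonneg _), norm_sub_sq_real, real_inner_smul_right,
    norm_smul, Real.norm_of_nonneg hc₀, real_inner_comm]
  nlinarith [mul_le_mul_of_nonneg_left ha hc₀,
    mul_nonneg (mul_nonneg hc₀ (sub_nonneg.2 hc₂)) (sq_nonneg ‖x‖)]

theorem apollonianRatio_zero_smul_le {x a b : E} {c : ℝ} (hc₀ : 0 ≤ c) (hc₁ : c < 1)
    (ha : ‖x‖ ^ 2 ≤ ⟪x, a⟫) (hb : ‖x‖ ^ 2 ≤ ⟪x, b⟫) :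
    apollonianRatio 0 (c • x) a b ≤ (1 - c)⁻¹ := by
  have hb' : ‖b‖ ≤ (1 - c)⁻¹ * ‖b - c • x‖ := by
    rw [le_inv_mul_iff₀ (sub_pos.2 hc₁)]
    exact mul_norm_le_norm_sub_smul hc₀ (norm_le_of_sq_norm_le_inner hb)
  simp only [apollonianRatio, dist_eq_norm, sub_zero]
  refine div_le_of_le_mul₀ (by positivity) (inv_nonneg.2 (sub_pos.2 hc₁).le) ?_
  calc ‖a - c • x‖ * ‖b‖ ≤ ‖a‖ * ((1 - c)⁻¹ * ‖b - c • x‖) :=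
        mul_le_mul (norm_sub_smul_le_of_sq_norm_le_inner hc₀ (by linarith) ha) hb'
          (norm_nonneg _) (norm_nonneg _)
    _ = (1 - c)⁻¹ * (‖a‖ * ‖b - c • x‖) := by ring

def circularCone (x : E) (r : ℝ) : Set E := {w | r * (‖x‖ * ‖w‖) ≤ ⟪x, w⟫}

theorem insert_setOf_angle_le_eq {p v : E} {θ : ℝ} (hpv : p ≠ v) (hθ₀ : 0 ≤ θ) (hθπ : θ ≤ π) :
    insert v {z | EuclideanGeometry.angle p v z ≤ θ} =
      {z | z - v ∈ circularCone (p - v) (cos θ)} := by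
  ext z
  rcases eq_or_ne z v with rfl | hzv
  · simp [circularCone]
  · simp only [mem_insert_iff, hzv, false_or, mem_ofPred_eq, EuclideanGeometry.angle,
      vsub_eq_sub, circularCone]
    exact angle_le_iff_cos_mul_le_inner (sub_ne_zero.2 hpv) (sub_ne_zero.2 hzv) hθ₀ hθπ

def coneCompl (x : E) (r : ℝ) : Set E := {z | z - x ∉ circularCone x r}

variable {x : E} {r : ℝ}

theorem isClosed_circularCone : IsClosed (circularCone x r) :=
  isClosed_le (by fun_prop) (by fun_prop)

theorem add_mem_circularCone (hr : 0 ≤ r) {u w : E} (hu : u ∈ circularCone x r)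
    (hw : w ∈ circularCone x r) : u + w ∈ circularCone x r := by
  simp only [circularCone, mem_ofPred_eq, inner_add_right] at *
  calc r * (‖x‖ * ‖u + w‖) ≤ r * (‖x‖ * (‖u‖ + ‖w‖)) := by gcongr; exact norm_add_le u w
    _ = r * (‖x‖ * ‖u‖) + r * (‖x‖ * ‖w‖) := by ring
    _ ≤ ⟪x, u⟫ + ⟪x, w⟫ := add_le_add hu hw

theorem smul_mem_circularCone {s : ℝ} (hs : 0 ≤ s) {w : E} (hw : w ∈ circularCone x r) :
    s • w ∈ circularCone x r := by
  simp only [circularCone, mem_ofPred_eq, norm_smul, real_inner_smul_right,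
    Real.norm_of_nonneg hs] at *
  calc r * (‖x‖ * (s * ‖w‖)) = s * (r * (‖x‖ * ‖w‖)) := by ring
    _ ≤ s * ⟪x, w⟫ := mul_le_mul_of_nonneg_left hw hs

theorem self_mem_circularCone (hr : r ≤ 1) : x ∈ circularCone x r := by
  simp only [circularCone, mem_ofPred_eq, real_inner_self_eq_norm_mul_norm]
  exact mul_le_of_le_one_left (by positivity) hr

theorem inner_nonneg_of_mem_circularCone (hr : 0 ≤ r) {w : E} (hw : w ∈ circularCone x r) :
    0 ≤ ⟪x, w⟫ :=
  le_trans (by positivity) hw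

theorem isOpen_coneCompl : IsOpen (coneCompl x r) :=
  (isClosed_circularCone.preimage (continuous_id.sub continuous_const)).isOpen_compl

theorem smul_self_mem_coneCompl (hx : x ≠ 0) (hr : 0 ≤ r) {t : ℝ} (ht : t < 1) :
    t • x ∈ coneCompl x r := fun h => by
  have hneg : ⟪x, t • x - x⟫ < 0 := by
    rw [inner_sub_right, real_inner_smul_right, real_inner_self_eq_norm_sq]
    nlinarith [pow_pos (norm_pos_iff.2 hx) 2]
  exact hneg.not_ge (inner_nonneg_of_mem_circularCone hr h)

theorem smul_self_notMem_coneCompl (hr : r ≤ 1) {t : ℝ} (ht : 1 ≤ t) :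
    t • x ∉ coneCompl x r := by
  rw [coneCompl, mem_ofPred_eq, not_not, show t • x - x = (t - 1) • x by module]
  exact smul_mem_circularCone (sub_nonneg.2 ht) (self_mem_circularCone hr)

theorem zero_mem_coneCompl (hx : x ≠ 0) (hr : 0 ≤ r) : 0 ∈ coneCompl x r := by
  simpa using smul_self_mem_coneCompl hx hr zero_lt_one

theorem self_notMem_coneCompl (hr : r ≤ 1) : x ∉ coneCompl x r := by
  simpa using smul_self_notMem_coneCompl (x := x) hr le_rfl

theorem sq_norm_le_inner_of_notMem_coneCompl (hr : 0 ≤ r) {z : E} (hz : z ∉ coneCompl x r) :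
    ‖x‖ ^ 2 ≤ ⟪x, z⟫ := by
  have := inner_nonneg_of_mem_circularCone hr (not_not.1 hz)
  rwa [inner_sub_right, real_inner_self_eq_norm_sq, sub_nonneg] at this

theorem starConvex_coneCompl (hx : x ≠ 0) (hr₀ : 0 ≤ r) (hr₁ : r ≤ 1) :
    StarConvex ℝ 0 (coneCompl x r) := by
  refine starConvex_zero_iff.2 fun z hz t ht₀ ht₁ => ?_
  rcases ht₀.eq_or_lt with rfl | ht₀
  · simpa using zero_mem_coneCompl hx hr₀
  intro htz
  apply hz
  rw [← inv_smul_smul₀ ht₀.ne' (z - x), show t • (z - x) = (t • z - x) + (1 - t) • x by module]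
  exact smul_mem_circularCone (inv_nonneg.2 ht₀.le) (add_mem_circularCone hr₀ htz
    (smul_mem_circularCone (sub_nonneg.2 ht₁) (self_mem_circularCone hr₁)))

theorem isConnected_coneCompl (hx : x ≠ 0) (hr₀ : 0 ≤ r) (hr₁ : r ≤ 1) :
    IsConnected (coneCompl x r) :=
  ((starConvex_coneCompl hx hr₀ hr₁).isPathConnected (zero_mem_coneCompl hx hr₀)).isConnected

theorem infDist_zero_compl_coneCompl (hr₀ : 0 ≤ r) (hr₁ : r ≤ 1) :
    infDist 0 (coneCompl x r)ᶜ = ‖x‖ := by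
  have hxK : x ∈ (coneCompl x r)ᶜ := self_notMem_coneCompl hr₁
  refine le_antisymm (by simpa using infDist_le_dist_of_mem (x := 0) hxK) ?_
  refine (le_infDist ⟨x, hxK⟩).2 fun z hz => ?_
  rw [dist_zero_left]
  exact norm_le_of_sq_norm_le_inner (sq_norm_le_inner_of_notMem_coneCompl hr₀ hz)

theorem notMem_coneCompl_of_mem_frontier {a : E} (ha : a ∈ frontier (coneCompl x r)) :
    a ∉ coneCompl x r :=
  ((isOpen_coneCompl (x := x) (r := r)).frontier_eq ▸ ha).2

theorem self_mem_frontier_coneCompl (hx : x ≠ 0) (hr₀ : 0 ≤ r) (hr₁ : r ≤ 1) :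
    x ∈ frontier (coneCompl x r) := by
  rw [(isOpen_coneCompl (x := x) (r := r)).frontier_eq]
  refine ⟨?_, self_notMem_coneCompl hr₁⟩
  have hlim : Tendsto (fun t : ℝ => t • x) (𝓝[<] 1) (𝓝 x) :=
    ((continuous_id.smul continuous_const).tendsto' 1 x (one_smul ℝ x)).mono_left
      nhdsWithin_le_nhds
  exact mem_closure_of_tendsto hlim
    (eventually_nhdsWithin_of_forall fun t ht => smul_self_mem_coneCompl hx hr₀ ht)

theorem exists_mem_frontier_coneCompl_norm_eq (hE : 1 < Module.rank ℝ E) (hx : x ≠ 0)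
    (hr₀ : 0 ≤ r) (hr₁ : r ≤ 1) {R : ℝ} (hR : ‖x‖ ≤ R) :
    ∃ a ∈ frontier (coneCompl x r), ‖a‖ = R := by
  have hX : 0 < ‖x‖ := norm_pos_iff.2 hx
  have hR₀ : 0 ≤ R := hX.le.trans hR
  have hsphere : ∀ s : ℝ, |s| = 1 → (s * (R / ‖x‖)) • x ∈ sphere (0 : E) R := fun s hs => by
    rw [mem_sphere_zero_iff_norm, norm_smul, Real.norm_eq_abs, abs_mul, hs,
      abs_of_nonneg (by positivity)]
    field_simp
  have hin : (-1 * (R / ‖x‖)) • x ∈ coneCompl x r :=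
    smul_self_mem_coneCompl hx hr₀ (by nlinarith [div_nonneg hR₀ hX.le])
  have hout : (1 * (R / ‖x‖)) • x ∉ coneCompl x r :=
    smul_self_notMem_coneCompl hr₁ (by rwa [one_mul, one_le_div hX])
  obtain ⟨a, ha, haF⟩ := (isConnected_sphere hE 0 hR₀).isPreconnected.inter_frontier_nonempty
    ⟨_, hsphere (-1) (by simp), hin⟩ ⟨_, hsphere 1 (by simp), hout⟩
  exact ⟨a, haF, mem_sphere_zero_iff_norm.1 ha⟩

theorem log_apollonianRatio_le_of_mem_frontier_coneCompl (hx : x ≠ 0) (hr : 0 ≤ r) {c : ℝ}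
    (hc₀ : 0 ≤ c) (hc₁ : c < 1) {a b : E} (ha : a ∈ frontier (coneCompl x r))
    (hb : b ∈ frontier (coneCompl x r)) :
    log (apollonianRatio 0 (c • x) a b) ≤ log (1 - c)⁻¹ := by
  have h0 : (0 : E) ∈ coneCompl x r := zero_mem_coneCompl hx hr
  have hy : c • x ∈ coneCompl x r := smul_self_mem_coneCompl hx hr hc₁
  have ha' := notMem_coneCompl_of_mem_frontier ha
  have hb' := notMem_coneCompl_of_mem_frontier hb
  exact log_le_log (apollonianRatio_pos (h0.ne_of_notMem ha').symm (hy.ne_of_notMem ha').symm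
      (h0.ne_of_notMem hb').symm (hy.ne_of_notMem hb').symm)
    (apollonianRatio_zero_smul_le hc₀ hc₁ (sq_norm_le_inner_of_notMem_coneCompl hr ha')
      (sq_norm_le_inner_of_notMem_coneCompl hr hb'))

theorem sSup_log_apollonianRatio_coneCompl (hE : 1 < Module.rank ℝ E) (hx : x ≠ 0)
    (hr₀ : 0 ≤ r) (hr₁ : r ≤ 1) {c : ℝ} (hc₀ : 0 ≤ c) (hc₁ : c < 1) :
    sSup {L | ∃ a ∈ frontier (coneCompl x r), ∃ b ∈ frontier (coneCompl x r),
        L = log (apollonianRatio 0 (c • x) a b)} = log (1 - c)⁻¹ := by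
  have hxF := self_mem_frontier_coneCompl hx hr₀ hr₁
  choose a haF haR using fun R : ℝ =>
    exists_mem_frontier_coneCompl_norm_eq hE hx hr₀ hr₁ (le_max_left ‖x‖ R)
  have haR : Tendsto (fun R => ‖a R‖) atTop atTop :=
    tendsto_atTop_mono (fun R => (haR R).ge.trans' (le_max_right _ _)) tendsto_id
  have hratio : ‖x‖ / ‖x - c • x‖ = (1 - c)⁻¹ := by
    rw [show x - c • x = (1 - c) • x by module, norm_smul,
      Real.norm_of_nonneg (sub_nonneg.2 hc₁.le), div_mul_cancel_right₀ (norm_ne_zero_iff.2 hx)]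
  have hlim : Tendsto (fun R => log (apollonianRatio 0 (c • x) (a R) x)) atTop
      (𝓝 (log (1 - c)⁻¹)) :=
    (hratio ▸ tendsto_apollonianRatio_zero (c • x) x haR).log
      (inv_ne_zero (sub_ne_zero.2 hc₁.ne'))
  refine IsLUB.csSup_eq ⟨?_, fun L hL => ?_⟩ ⟨_, x, hxF, x, hxF, rfl⟩
  · rintro _ ⟨a, ha, b, hb, rfl⟩
    exact log_apollonianRatio_le_of_mem_frontier_coneCompl hx hr₀ hc₀ hc₁ ha hb
  · exact le_of_tendsto' hlim fun R => hL ⟨a R, haF R, x, hxF, rfl⟩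

end InnerProductSpace

/-- Let `n ≥ 2`, `x ≠ 0`, and let
`G₂ = ℝⁿ \ S_{π/4, x, 2x}` where `S_{α,x,y} = {x} ∪ {z : ∠(y,x,z) ≤ α}` is an angular
domain. Then `G₂` is a domain (open and connected) with `0 ∈ G₂`, `d_{G₂}(0) = |x|`,
and for every `y = c • x` with `0 ≤ c < 1`, the Apollonian distance
`α_{G₂}(0,y) = sup_{a,b ∈ ∂G₂} log ((|a-y| ⬝ |b|)/(|a| ⬝ |b-y|))` equals
`log (|x| / (|x| - |y|))`. -/
theorem apollonian_in_angular_complement (n : ℕ) (hn : 2 ≤ n)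
    (x : EuclideanSpace ℝ (Fin n)) (hx : x ≠ 0)
    (G₂ : Set (EuclideanSpace ℝ (Fin n)))
    (hG₂ : G₂ =
      (insert x {z | EuclideanGeometry.angle ((2 : ℝ) • x) x z ≤ Real.pi / 4})ᶜ) :
    IsOpen G₂ ∧ IsConnected G₂ ∧ (0 : EuclideanSpace ℝ (Fin n)) ∈ G₂ ∧
      Metric.infDist 0 G₂ᶜ = ‖x‖ ∧
      ∀ c : ℝ, 0 ≤ c → c < 1 →
        sSup {L : ℝ | ∃ a ∈ frontier G₂, ∃ b ∈ frontier G₂,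
            L = Real.log ((dist a (c • x) * dist b 0) / (dist a 0 * dist b (c • x)))} =
          Real.log (‖x‖ / (‖x‖ - ‖c • x‖)) := by
  have hE : 1 < Module.rank ℝ (EuclideanSpace ℝ (Fin n)) := by
    rw [← Module.finrank_eq_rank, finrank_euclideanSpace_fin]
    exact_mod_cast hn
  have hr₀ : 0 ≤ cos (π / 4) := by rw [cos_pi_div_four]; positivity
  have hr₁ : cos (π / 4) ≤ 1 := cos_le_one _
  obtain rfl : G₂ = coneCompl x (cos (π / 4)) := by
    rw [hG₂, insert_setOf_angle_le_eq (by simpa [two_smul] using hx) (by positivity)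
      (by linarith [pi_pos]), two_smul, add_sub_cancel_right]
    rfl
  refine ⟨isOpen_coneCompl, isConnected_coneCompl hx hr₀ hr₁, zero_mem_coneCompl hx hr₀,
    infDist_zero_compl_coneCompl hr₀ hr₁, fun c hc₀ hc₁ => ?_⟩
  rw [norm_smul, Real.norm_of_nonneg hc₀, ← one_sub_mul,
    div_mul_cancel_right₀ (norm_ne_zero_iff.2 hx)]
  exact sSup_log_apollonianRatio_coneCompl hE hx hr₀ hr₁ hc₀ hc₁
end

section
/- Let n ≥ 2, let x ∈ ℝⁿ with x ≠ 0, and let G′ = ℝⁿ \ ( S_{π/4,−x,−2x} ∪ S_{π/4,x,2x} ). Then G′ is a domain with 0 ∈ G′, d_{G′}(0) = |x|, and for every y = c·x with c ∈ [0,1) the Apollonian distance satisfies α_{G′}(0,y) = log( (|x| + |y|) / (|x| − |y|) ), the supremum being attained at the boundary pair a = −x, b = x. -/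
/-!
The complement of `G'` is the union of the two closed cones with apices `±x` opening away from
the origin. Each cone misses the open ball `B(0, |x|)` and is mapped into itself by every
dilation `z ↦ s z` with `s ≥ 1`; hence `G'` is open, star-shaped about `0` and contains
`B(0, |x|)`, while `±x ∉ G'` lie on the sphere bounding that ball, so they are boundary points
of `G'` and `d_{G'}(0) = |x|`. For `y = c x` and boundary points `a, b` we have
`|a|, |b| ≥ |x|`, and the triangle inequality gives `|a - y| / |a| ≤ 1 + |y| / |x|` and
`|b| / |b - y| ≤ |x| / (|x| - |y|)`; both are equalities for `a = -x`, `b = x`.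
-/

open Real Set Metric EuclideanGeometry InnerProductGeometry
open scoped RealInnerProductSpace

section AngularDomain

variable {V P : Type*} [NormedAddCommGroup V] [InnerProductSpace ℝ V] [MetricSpace P]
  [NormedAddTorsor V P]

theorem insert_setOf_angle_le_eq_s12 {p q : P} (hqp : q ≠ p) {α : ℝ} (hα₀ : 0 ≤ α) (hα : α ≤ π) :
    insert p {z | ∠ q p z ≤ α} =
      {z | cos α * (‖q -ᵥ p‖ * ‖z -ᵥ p‖) ≤ ⟪q -ᵥ p, z -ᵥ p⟫} := by
  ext z
  rcases eq_or_ne z p with rfl | hzp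
  · simp
  have hpos : 0 < ‖q -ᵥ p‖ * ‖z -ᵥ p‖ := by
    have : q -ᵥ p ≠ (0 : V) := vsub_ne_zero.2 hqp
    have : z -ᵥ p ≠ (0 : V) := vsub_ne_zero.2 hzp
    positivity
  change z = p ∨ ∠ q p z ≤ α ↔ cos α * (‖q -ᵥ p‖ * ‖z -ᵥ p‖) ≤ ⟪q -ᵥ p, z -ᵥ p⟫
  rw [or_iff_right hzp, ← cos_angle_mul_norm_mul_norm, mul_le_mul_iff_left₀ hpos]
  exact (strictAntiOn_cos.le_iff_ge ⟨hα₀, hα⟩ ⟨angle_nonneg (q -ᵥ p) (z -ᵥ p),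
    angle_le_pi (q -ᵥ p) (z -ᵥ p)⟩).symm

/-- The angular domain `S_{arccos c, v, 2v}`. -/
def outerCone (v : V) (c : ℝ) : Set V :=
  {z | c * (‖v‖ * ‖z - v‖) ≤ ⟪v, z - v⟫}

variable {v z : V} {c : ℝ}

theorem angularDomain_two_smul_eq_outerCone (hv : v ≠ 0) {α : ℝ} (hα₀ : 0 ≤ α) (hα : α ≤ π) :
    insert v {z | ∠ ((2 : ℝ) • v) v z ≤ α} = outerCone v (cos α) := by
  have hsub : (2 : ℝ) • v -ᵥ v = v := by rw [vsub_eq_sub]; module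
  rw [insert_setOf_angle_le_eq_s12 (fun h => hv (by rw [← hsub, h, vsub_self])) hα₀ hα, hsub]
  rfl

theorem self_mem_outerCone (v : V) (c : ℝ) : v ∈ outerCone v c := by
  simp [outerCone]

theorem isClosed_outerCone (v : V) (c : ℝ) : IsClosed (outerCone v c) :=
  isClosed_le (by fun_prop) (by fun_prop)

theorem norm_le_of_mem_outerCone (hc : 0 ≤ c) (hz : z ∈ outerCone v c) : ‖v‖ ≤ ‖z‖ := by
  have hinner : 0 ≤ ⟪v, z - v⟫ := le_trans (by positivity) hz
  rw [inner_sub_right, real_inner_self_eq_norm_sq] at hinner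
  nlinarith [real_inner_le_norm v z, norm_nonneg v, norm_nonneg z]

theorem ball_subset_compl_outerCone (hc : 0 ≤ c) : ball 0 ‖v‖ ⊆ (outerCone v c)ᶜ :=
  fun _ hz hzc => (mem_ball_zero_iff.1 hz).not_ge (norm_le_of_mem_outerCone hc hzc)

theorem smul_mem_outerCone (hc₀ : 0 ≤ c) (hc₁ : c ≤ 1) (hz : z ∈ outerCone v c) {s : ℝ}
    (hs : 1 ≤ s) : s • z ∈ outerCone v c := by
  have hsplit : s • z - v = s • (z - v) + (s - 1) • v := by module
  have hv : c * (‖v‖ * ‖v‖) ≤ ⟪v, v⟫ := by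
    rw [real_inner_self_eq_norm_mul_norm]
    exact mul_le_of_le_one_left (by positivity) hc₁
  have hs₀ : 0 ≤ s - 1 := by linarith
  calc c * (‖v‖ * ‖s • z - v‖)
      ≤ c * (‖v‖ * (s * ‖z - v‖ + (s - 1) * ‖v‖)) := by
        rw [hsplit]
        gcongr
        refine (norm_add_le _ _).trans_eq ?_
        rw [norm_smul, norm_smul, norm_of_nonneg (by linarith), norm_of_nonneg hs₀]
    _ = s * (c * (‖v‖ * ‖z - v‖)) + (s - 1) * (c * (‖v‖ * ‖v‖)) := by ring
    _ ≤ s * ⟪v, z - v⟫ + (s - 1) * ⟪v, v⟫ := by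
        gcongr
        exact hz
    _ = ⟪v, s • z - v⟫ := by
        rw [hsplit, inner_add_right, real_inner_smul_right, real_inner_smul_right]

theorem starConvex_compl_outerCone (hc₀ : 0 ≤ c) (hc₁ : c ≤ 1) :
    StarConvex ℝ 0 (outerCone v c)ᶜ := by
  rw [starConvex_zero_iff]
  intro z hz t ht₀ ht₁ htz
  rcases ht₀.eq_or_lt with rfl | ht₀
  · have hv : v = 0 := by simpa using norm_le_of_mem_outerCone hc₀ htz
    subst hv
    exact hz (by simp [outerCone])
  · refine hz ?_
    simpa [smul_smul, inv_mul_cancel₀ ht₀.ne'] using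
      smul_mem_outerCone hc₀ hc₁ htz ((one_le_inv₀ ht₀).2 ht₁)

end AngularDomain

theorem mem_frontier_of_ball_subset {E : Type*} [NormedAddCommGroup E] [NormedSpace ℝ E]
    {s : Set E} {p x : E} {r : ℝ} (hr : r ≠ 0) (hs : ball p r ⊆ s) (hx : dist x p = r)
    (hxs : x ∉ s) : x ∈ frontier s :=
  ⟨closure_mono hs (by rw [closure_ball p hr]; exact hx.le), fun h => hxs (interior_subset h)⟩

theorem infDist_compl_eq_of_ball_subset {α : Type*} [PseudoMetricSpace α] {s : Set α} {p x : α}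
    {r : ℝ} (hs : ball p r ⊆ s) (hxs : x ∉ s) (hx : dist p x = r) : infDist p sᶜ = r :=
  le_antisymm (hx ▸ infDist_le_dist_of_mem hxs)
    ((le_infDist ⟨x, hxs⟩).2 fun _ hz => not_lt.1 fun h => hz (hs (mem_ball'.2 h)))

section Apollonian

variable {E : Type*} [NormedAddCommGroup E]

theorem log_apollonian_ratio_le {a b y : E} {r : ℝ} (hy : ‖y‖ < r) (ha : r ≤ ‖a‖)
    (hb : r ≤ ‖b‖) :
    log (dist a y * dist b 0 / (dist a 0 * dist b y)) ≤ log ((r + ‖y‖) / (r - ‖y‖)) := by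
  rw [dist_zero_right, dist_zero_right]
  have hr : 0 < r := (norm_nonneg y).trans_lt hy
  have hay : dist a y ≤ ‖a‖ + ‖y‖ := by rw [dist_eq_norm]; exact norm_sub_le a y
  have hby : ‖b‖ - ‖y‖ ≤ dist b y := by rw [dist_eq_norm]; exact norm_sub_norm_le b y
  have hay₀ : 0 < dist a y := by
    rw [dist_eq_norm]; linarith [norm_sub_norm_le a y]
  have hby₀ : 0 < dist b y := by linarith
  have hfactor_a : dist a y / ‖a‖ ≤ (r + ‖y‖) / r := by
    rw [div_le_div_iff₀ (by linarith) hr]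
    nlinarith [norm_nonneg y]
  have hfactor_b : ‖b‖ / dist b y ≤ r / (r - ‖y‖) := by
    rw [div_le_div_iff₀ hby₀ (by linarith)]
    nlinarith [norm_nonneg y]
  have ha₀ : 0 < ‖a‖ := hr.trans_le ha
  have hb₀ : 0 < ‖b‖ := hr.trans_le hb
  refine log_le_log (by positivity) ?_
  calc dist a y * ‖b‖ / (‖a‖ * dist b y) = dist a y / ‖a‖ * (‖b‖ / dist b y) := by
        rw [mul_div_mul_comm]
    _ ≤ (r + ‖y‖) / r * (r / (r - ‖y‖)) :=
        mul_le_mul hfactor_a hfactor_b (by positivity) (by positivity)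
    _ = (r + ‖y‖) / (r - ‖y‖) := by field_simp

theorem apollonian_ratio_neg_self [NormedSpace ℝ E] (x : E) {c : ℝ} (hc₀ : 0 ≤ c)
    (hc₁ : c ≤ 1) :
    dist (-x) (c • x) * dist x 0 / (dist (-x) 0 * dist x (c • x)) =
      (‖x‖ + ‖c • x‖) / (‖x‖ - ‖c • x‖) := by
  rcases eq_or_ne x 0 with rfl | hx
  · simp
  have hnear : dist x (c • x) = ‖x‖ - ‖c • x‖ := by
    rw [dist_eq_norm, show x - c • x = (1 - c) • x by module, norm_smul, norm_smul,
      norm_of_nonneg (by linarith), norm_of_nonneg hc₀]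
    ring
  have hfar : dist (-x) (c • x) = ‖x‖ + ‖c • x‖ := by
    rw [dist_eq_norm, show -x - c • x = -((1 + c) • x) by module, norm_neg, norm_smul,
      norm_smul, norm_of_nonneg (by linarith), norm_of_nonneg hc₀]
    ring
  rw [hnear, hfar, dist_zero_right, dist_zero_right, norm_neg, mul_comm ‖x‖ (_ - _),
    mul_div_mul_right _ _ (norm_ne_zero_iff.2 hx)]

end Apollonian

theorem apollonian_in_double_angular_complement_general (n : ℕ)
    (x : EuclideanSpace ℝ (Fin n)) (hx : x ≠ 0)
    (G' : Set (EuclideanSpace ℝ (Fin n)))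
    (hG' : G' =
      ((insert (-x) {z | EuclideanGeometry.angle (-((2 : ℝ) • x)) (-x) z ≤ Real.pi / 4}) ∪
        (insert x {z | EuclideanGeometry.angle ((2 : ℝ) • x) x z ≤ Real.pi / 4}))ᶜ) :
    IsOpen G' ∧ IsConnected G' ∧ (0 : EuclideanSpace ℝ (Fin n)) ∈ G' ∧
      Metric.infDist 0 G'ᶜ = ‖x‖ ∧
      ∀ c : ℝ, 0 ≤ c → c < 1 →
        sSup {L : ℝ | ∃ a ∈ frontier G', ∃ b ∈ frontier G',
            L = Real.log ((dist a (c • x) * dist b 0) / (dist a 0 * dist b (c • x)))} =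
          Real.log ((‖x‖ + ‖c • x‖) / (‖x‖ - ‖c • x‖)) ∧
        (-x) ∈ frontier G' ∧ x ∈ frontier G' ∧
        Real.log ((dist (-x) (c • x) * dist x 0) / (dist (-x) 0 * dist x (c • x))) =
          Real.log ((‖x‖ + ‖c • x‖) / (‖x‖ - ‖c • x‖)) := by
  have hκ₀ : 0 ≤ cos (π / 4) := cos_nonneg_of_mem_Icc ⟨by linarith [pi_pos], by linarith [pi_pos]⟩
  have hκ₁ : cos (π / 4) ≤ 1 := cos_le_one _
  have hα₀ : 0 ≤ π / 4 := by positivity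
  have hα : π / 4 ≤ π := by linarith [pi_pos]
  have hG : G' = (outerCone (-x) (cos (π / 4)))ᶜ ∩ (outerCone x (cos (π / 4)))ᶜ := by
    rw [hG', compl_union, ← smul_neg, angularDomain_two_smul_eq_outerCone (neg_ne_zero.2 hx) hα₀ hα,
      angularDomain_two_smul_eq_outerCone hx hα₀ hα]
  have hball : ball 0 ‖x‖ ⊆ G' := hG ▸ subset_inter
    (norm_neg x ▸ ball_subset_compl_outerCone hκ₀) (ball_subset_compl_outerCone hκ₀)
  have hopen : IsOpen G' :=
    hG ▸ (isClosed_outerCone _ _).isOpen_compl.inter (isClosed_outerCone _ _).isOpen_compl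
  have h0 : (0 : EuclideanSpace ℝ (Fin n)) ∈ G' := hball (mem_ball_self (norm_pos_iff.2 hx))
  have hxG : x ∉ G' := fun h => (hG ▸ h).2 (self_mem_outerCone x _)
  have hnxG : -x ∉ G' := fun h => (hG ▸ h).1 (self_mem_outerCone (-x) _)
  have hxfr := mem_frontier_of_ball_subset (norm_ne_zero_iff.2 hx) hball (dist_zero_right x) hxG
  have hnxfr := mem_frontier_of_ball_subset (norm_ne_zero_iff.2 hx) hball
    ((dist_zero_right _).trans (norm_neg x)) hnxG
  have hconn : IsConnected G' := (hG ▸ (starConvex_compl_outerCone hκ₀ hκ₁).inter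
    (starConvex_compl_outerCone hκ₀ hκ₁)).isPathConnected h0 |>.isConnected
  have hfr : ∀ z ∈ frontier G', ‖x‖ ≤ ‖z‖ := fun z hz =>
    not_lt.1 fun h => (hopen.frontier_eq ▸ hz).2 (hball (mem_ball_zero_iff.2 h))
  refine ⟨hopen, hconn, h0, infDist_compl_eq_of_ball_subset hball hxG (dist_zero_left x),
    fun c hc₀ hc₁ => ⟨?_, hnxfr, hxfr, by rw [apollonian_ratio_neg_self x hc₀ hc₁.le]⟩⟩
  have hy : ‖c • x‖ < ‖x‖ := by
    rw [norm_smul, norm_of_nonneg hc₀]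
    exact mul_lt_of_lt_one_left (norm_pos_iff.2 hx) hc₁
  refine IsGreatest.csSup_eq
    ⟨⟨-x, hnxfr, x, hxfr, by rw [apollonian_ratio_neg_self x hc₀ hc₁.le]⟩, ?_⟩
  rintro _ ⟨a, ha, b, hb, rfl⟩
  exact log_apollonian_ratio_le hy (hfr a ha) (hfr b hb)

/-- Let `n ≥ 2`, `x ≠ 0`, and let
`G' = ℝⁿ \ (S_{π/4, -x, -2x} ∪ S_{π/4, x, 2x})` where
`S_{α,x,y} = {x} ∪ {z : ∠(y,x,z) ≤ α}` is an angular domain. Then `G'` is a domain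
(open and connected) with `0 ∈ G'`, `d_{G'}(0) = |x|`, and for every `y = c • x` with
`0 ≤ c < 1`, the Apollonian distance
`α_{G'}(0,y) = sup_{a,b ∈ ∂G'} log ((|a-y| ⬝ |b|)/(|a| ⬝ |b-y|))` equals
`log ((|x| + |y|) / (|x| - |y|))`, the supremum being attained at the boundary pair
`a = -x`, `b = x`. -/
theorem apollonian_in_double_angular_complement (n : ℕ) (hn : 2 ≤ n)
    (x : EuclideanSpace ℝ (Fin n)) (hx : x ≠ 0)
    (G' : Set (EuclideanSpace ℝ (Fin n)))
    (hG' : G' =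
      ((insert (-x) {z | EuclideanGeometry.angle (-((2 : ℝ) • x)) (-x) z ≤ Real.pi / 4}) ∪
        (insert x {z | EuclideanGeometry.angle ((2 : ℝ) • x) x z ≤ Real.pi / 4}))ᶜ) :
    IsOpen G' ∧ IsConnected G' ∧ (0 : EuclideanSpace ℝ (Fin n)) ∈ G' ∧
      Metric.infDist 0 G'ᶜ = ‖x‖ ∧
      ∀ c : ℝ, 0 ≤ c → c < 1 →
        sSup {L : ℝ | ∃ a ∈ frontier G', ∃ b ∈ frontier G',
            L = Real.log ((dist a (c • x) * dist b 0) / (dist a 0 * dist b (c • x)))} =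
          Real.log ((‖x‖ + ‖c • x‖) / (‖x‖ - ‖c • x‖)) ∧
        (-x) ∈ frontier G' ∧ x ∈ frontier G' ∧
        Real.log ((dist (-x) (c • x) * dist x 0) / (dist (-x) 0 * dist x (c • x))) =
          Real.log ((‖x‖ + ‖c • x‖) / (‖x‖ - ‖c • x‖)) :=
  apollonian_in_double_angular_complement_general n x hx G' hG'
end

section
/- For all u, w ∈ G, the Seittenranta distance satisfies δ_G(u,w) ≤ log( 1 + |u−w|/d_G(u) + |u−w|/d_G(w) + |u−w|² / ( d_G(u)·d_G(w) ) ). -/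
/-!
By the triangle inequality `|a - b| ≤ |a - u| + |u - w| + |w - b|`, so the absolute ratio
`|a - b| |u - w| / (|a - u| |b - w|)` is at most
`|u - w| / |b - w| + |u - w| / |a - u| + |u - w|² / (|a - u| |b - w|)`. Boundary points of an open
set `G` lie outside `G`, hence `|a - u| ≥ d_G(u)` and `|b - w| ≥ d_G(w)`; taking the supremum over
`a, b ∈ ∂G` and using monotonicity of `log` gives the bound.
-/

open Metric

section PseudoMetric

variable {X : Type*} [PseudoMetricSpace X]

theorem dist_mul_dist_div_le_of_le_dist {a b u w : X} {r s : ℝ} (hr : 0 < r) (hs : 0 < s)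
    (hau : r ≤ dist a u) (hbw : s ≤ dist b w) :
    dist a b * dist u w / (dist a u * dist b w) ≤
      dist u w / r + dist u w / s + dist u w ^ 2 / (r * s) := by
  have hau₀ : 0 < dist a u := hr.trans_le hau
  have hbw₀ : 0 < dist b w := hs.trans_le hbw
  calc dist a b * dist u w / (dist a u * dist b w)
      ≤ (dist a u + dist u w + dist b w) * dist u w / (dist a u * dist b w) := by
        gcongr
        simpa only [dist_comm w b] using dist_triangle4 a u w b
    _ = dist u w / dist b w + dist u w / dist a u + dist u w ^ 2 / (dist a u * dist b w) := by
        field_simp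
        ring
    _ ≤ dist u w / s + dist u w / r + dist u w ^ 2 / (r * s) := by
        gcongr
    _ = dist u w / r + dist u w / s + dist u w ^ 2 / (r * s) := by ring

theorem dist_mul_dist_div_le_infDist {F : Set X} (hF : IsClosed F) {a b u w : X}
    (ha : a ∈ F) (hb : b ∈ F) (hu : u ∉ F) (hw : w ∉ F) :
    dist a b * dist u w / (dist a u * dist b w) ≤
      dist u w / infDist u F + dist u w / infDist w F +
        dist u w ^ 2 / (infDist u F * infDist w F) :=
  dist_mul_dist_div_le_of_le_dist ((hF.notMem_iff_infDist_pos ⟨a, ha⟩).1 hu)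
    ((hF.notMem_iff_infDist_pos ⟨a, ha⟩).1 hw)
    (dist_comm a u ▸ infDist_le_dist_of_mem ha) (dist_comm b w ▸ infDist_le_dist_of_mem hb)

end PseudoMetric

theorem seittenranta_upper_bound_general (n : ℕ)
    (G : Set (EuclideanSpace ℝ (Fin n)))
    (hGopen : IsOpen G)
    (u w : EuclideanSpace ℝ (Fin n)) (hu : u ∈ G) (hw : w ∈ G) :
    sSup {L : ℝ | ∃ a ∈ frontier G, ∃ b ∈ frontier G,
        L = Real.log (1 + (dist a b * dist u w) / (dist a u * dist b w))} ≤
      Real.log (1 + dist u w / Metric.infDist u Gᶜ + dist u w / Metric.infDist w Gᶜ +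
        dist u w ^ 2 / (Metric.infDist u Gᶜ * Metric.infDist w Gᶜ)) := by
  have hfrontier : frontier G ⊆ Gᶜ := fun x hx ↦ (hGopen.frontier_eq ▸ hx).2
  have hbound_nonneg : 0 ≤ dist u w / infDist u Gᶜ + dist u w / infDist w Gᶜ +
      dist u w ^ 2 / (infDist u Gᶜ * infDist w Gᶜ) := by
    have hdu : 0 ≤ infDist u Gᶜ := infDist_nonneg
    have hdw : 0 ≤ infDist w Gᶜ := infDist_nonneg
    positivity
  refine Real.sSup_le ?_ (Real.log_nonneg (by linarith))
  rintro _ ⟨a, ha, b, hb, rfl⟩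
  refine Real.log_le_log (by positivity) ?_
  have hratio := dist_mul_dist_div_le_infDist hGopen.isClosed_compl (hfrontier ha)
    (hfrontier hb) (not_not.2 hu) (not_not.2 hw)
  linarith

/-- Let `G ⊊ ℝⁿ` be a domain. For all `u, w ∈ G`, the Seittenranta
distance `δ_G(u,w) = sup_{a,b ∈ ∂G} log (1 + (|a-b| ⬝ |u-w|)/(|a-u| ⬝ |b-w|))`
satisfies
`δ_G(u,w) ≤ log (1 + |u-w|/d_G u + |u-w|/d_G w + |u-w|²/(d_G u ⬝ d_G w))`. -/
theorem seittenranta_upper_bound (n : ℕ) (hn : 0 < n)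
    (G : Set (EuclideanSpace ℝ (Fin n)))
    (hGopen : IsOpen G) (hGconn : IsConnected G) (hGne : G ≠ Set.univ)
    (u w : EuclideanSpace ℝ (Fin n)) (hu : u ∈ G) (hw : w ∈ G) :
    sSup {L : ℝ | ∃ a ∈ frontier G, ∃ b ∈ frontier G,
        L = Real.log (1 + (dist a b * dist u w) / (dist a u * dist b w))} ≤
      Real.log (1 + dist u w / Metric.infDist u Gᶜ + dist u w / Metric.infDist w Gᶜ +
        dist u w ^ 2 / (Metric.infDist u Gᶜ * Metric.infDist w Gᶜ)) :=
  seittenranta_upper_bound_general n G hGopen u w hu hw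
end

section
/- Let u, w ∈ ℝⁿ with u ≠ w and suppose that 0 does not lie on the affine line through u and w. Then the function h(β) = ∠(u, 0, u + β·(w−u)), the Euclidean angle at vertex 0 between u and u + β·(w−u), is strictly increasing for β ∈ [0,∞): for all 0 ≤ β₁ < β₂ one has h(β₁) < h(β₂). -/
/-!
Write `x β = u + β • (w - u)`. The Gram determinant of `(u, x β)` is `β²` times that of `(u, w)`,
so `sin ∠(u, x β) * ‖u‖ * ‖x β‖ = β * S` with `S = sin ∠(u, w) * ‖u‖ * ‖w‖ > 0`, while
`cos ∠(u, x β) * ‖u‖ * ‖x β‖ = ⟪u, x β⟫` is affine in `β`. Expanding the sine of a difference gives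
`sin (h β₂ - h β₁) * ‖u‖² * ‖x β₁‖ * ‖x β₂‖ = (β₂ - β₁) * ‖u‖² * S > 0`, and since both angles lie
in `[0, π]` this forces `h β₁ < h β₂`.
-/

open Real
open scoped RealInnerProductSpace EuclideanGeometry

theorem Real.lt_of_sin_sub_pos {θ₁ θ₂ : ℝ} (h₁ : θ₁ ≤ π) (h₂ : 0 ≤ θ₂) (h : 0 < sin (θ₂ - θ₁)) :
    θ₁ < θ₂ := by
  by_contra! h₂₁
  exact h.not_ge (sin_nonpos_of_nonpos_of_neg_pi_le (by linarith) (by linarith))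

namespace InnerProductGeometry

variable {V : Type*} [NormedAddCommGroup V] [InnerProductSpace ℝ V]

theorem sin_angle_lineMap_mul_norm_mul_norm (u w : V) (β : ℝ) :
    sin (angle u (AffineMap.lineMap u w β)) * (‖u‖ * ‖AffineMap.lineMap u w β‖) =
      |β| * (sin (angle u w) * (‖u‖ * ‖w‖)) := by
  have gram : ⟪u, u⟫ * ⟪AffineMap.lineMap u w β, AffineMap.lineMap u w β⟫ -
      ⟪u, AffineMap.lineMap u w β⟫ * ⟪u, AffineMap.lineMap u w β⟫ =
      β ^ 2 * (⟪u, u⟫ * ⟪w, w⟫ - ⟪u, w⟫ * ⟪u, w⟫) := by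
    simp only [AffineMap.lineMap_apply_module, inner_add_left, inner_add_right,
      real_inner_smul_left, real_inner_smul_right, real_inner_comm u w]
    ring
  rw [sin_angle_mul_norm_mul_norm, sin_angle_mul_norm_mul_norm, gram,
    Real.sqrt_mul (sq_nonneg β), Real.sqrt_sq_eq_abs]

theorem inner_lineMap_right (u w : V) (β : ℝ) :
    ⟪u, AffineMap.lineMap u w β⟫ = (1 - β) * ‖u‖ ^ 2 + β * ⟪u, w⟫ := by
  rw [AffineMap.lineMap_apply_module, inner_add_right, real_inner_smul_right,
    real_inner_smul_right, real_inner_self_eq_norm_sq]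

theorem angle_lineMap_lt_angle_lineMap {u w : V} (hu : u ≠ 0) (hw : w ≠ 0)
    (huw : 0 < sin (angle u w)) {β₁ β₂ : ℝ} (h₁ : 0 ≤ β₁) (h₁₂ : β₁ < β₂) :
    angle u (AffineMap.lineMap u w β₁) < angle u (AffineMap.lineMap u w β₂) := by
  have s₁ := sin_angle_lineMap_mul_norm_mul_norm u w β₁
  have s₂ := sin_angle_lineMap_mul_norm_mul_norm u w β₂
  have c₁ := cos_angle_mul_norm_mul_norm u (AffineMap.lineMap u w β₁)
  have c₂ := cos_angle_mul_norm_mul_norm u (AffineMap.lineMap u w β₂)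
  rw [inner_lineMap_right] at c₁ c₂
  rw [abs_of_nonneg h₁] at s₁
  rw [abs_of_nonneg (h₁.trans h₁₂.le)] at s₂
  set x₁ := AffineMap.lineMap u w β₁
  set x₂ := AffineMap.lineMap u w β₂
  set S := sin (angle u w) * (‖u‖ * ‖w‖)
  have key : sin (angle u x₂ - angle u x₁) * ((‖u‖ * ‖x₁‖) * (‖u‖ * ‖x₂‖)) =
      (β₂ - β₁) * ‖u‖ ^ 2 * S := by
    rw [sin_sub]
    linear_combination (cos (angle u x₁) * (‖u‖ * ‖x₁‖)) * s₂ + (β₂ * S) * c₁ -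
      (sin (angle u x₁) * (‖u‖ * ‖x₁‖)) * c₂ - ((1 - β₂) * ‖u‖ ^ 2 + β₂ * ⟪u, w⟫) * s₁
  refine Real.lt_of_sin_sub_pos (angle_le_pi _ _) (angle_nonneg _ _) ?_
  refine pos_of_mul_pos_left (b := (‖u‖ * ‖x₁‖) * (‖u‖ * ‖x₂‖)) ?_ (by positivity)
  rw [key]
  have hu' := norm_pos_iff.2 hu
  exact mul_pos (mul_pos (sub_pos.2 h₁₂) (pow_pos hu' 2))
    (mul_pos huw (mul_pos hu' (norm_pos_iff.2 hw)))

end InnerProductGeometry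

namespace EuclideanGeometry

variable {V P : Type*} [NormedAddCommGroup V] [InnerProductSpace ℝ V] [MetricSpace P]
  [NormedAddTorsor V P]

theorem angle_lineMap_lt_angle_lineMap {a b p : P} (h : ¬Collinear ℝ {a, p, b})
    {β₁ β₂ : ℝ} (h₁ : 0 ≤ β₁) (h₁₂ : β₁ < β₂) :
    ∠ a p (AffineMap.lineMap a b β₁) < ∠ a p (AffineMap.lineMap a b β₂) := by
  have hvsub (β : ℝ) : AffineMap.lineMap a b β -ᵥ p = AffineMap.lineMap (a -ᵥ p) (b -ᵥ p) β := by
    rw [← AffineMap.lineMap_vsub_lineMap, AffineMap.lineMap_same_apply]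
  simp only [EuclideanGeometry.angle, hvsub]
  exact InnerProductGeometry.angle_lineMap_lt_angle_lineMap
    (vsub_ne_zero.2 (ne₁₂_of_not_collinear h)) (vsub_ne_zero.2 (ne₂₃_of_not_collinear h).symm)
    (sin_pos_of_not_collinear h) h₁ h₁₂

end EuclideanGeometry

theorem visual_angle_strictly_increasing_general (n : ℕ)
    (u w : EuclideanSpace ℝ (Fin n)) (huw : u ≠ w)
    (h0 : (0 : EuclideanSpace ℝ (Fin n)) ∉ affineSpan ℝ ({u, w} :
      Set (EuclideanSpace ℝ (Fin n)))) :
    ∀ β₁ β₂ : ℝ, 0 ≤ β₁ → β₁ < β₂ →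
      EuclideanGeometry.angle u 0 (u + β₁ • (w - u)) <
        EuclideanGeometry.angle u 0 (u + β₂ • (w - u)) := by
  intro β₁ β₂ h₁ h₁₂
  have hcol : ¬Collinear ℝ {u, 0, w} := fun hcol =>
    h0 (hcol.mem_affineSpan_of_mem_of_ne (by simp) (by simp) (by simp) huw)
  have hline (β : ℝ) : u + β • (w - u) = AffineMap.lineMap u w β := by
    rw [AffineMap.lineMap_apply_module', add_comm]
  rw [hline, hline]
  exact EuclideanGeometry.angle_lineMap_lt_angle_lineMap hcol h₁ h₁₂

/-- Let `u, w ∈ ℝⁿ` with `u ≠ w` and suppose `0` does not lie on the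
affine line through `u` and `w`. Then the function
`h β = ∠(u, 0, u + β • (w - u))` (the Euclidean angle at vertex `0`) is strictly
increasing on `[0, ∞)`. -/
theorem visual_angle_strictly_increasing (n : ℕ) (hn : 0 < n)
    (u w : EuclideanSpace ℝ (Fin n)) (huw : u ≠ w)
    (h0 : (0 : EuclideanSpace ℝ (Fin n)) ∉ affineSpan ℝ ({u, w} :
      Set (EuclideanSpace ℝ (Fin n)))) :
    ∀ β₁ β₂ : ℝ, 0 ≤ β₁ → β₁ < β₂ →
      EuclideanGeometry.angle u 0 (u + β₁ • (w - u)) <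
        EuclideanGeometry.angle u 0 (u + β₂ • (w - u)) :=
  visual_angle_strictly_increasing_general n u w huw h0
end
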